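/- arXiv:2501.15883 — 2 statements merged into one kernel-verified Lean document; each statement's English description precedes it below -/
import Mathlib

section
/- If two mincuts X = ⟨A,Ā⟩ and Y = ⟨B,B̄⟩ of a simple connected graph G cross, then the edge-connectivity λ(G) is even. -/
open SimpleGraph

/-- `X` is an edge-cut of the connected graph `G`: a set of edges of `G` whose
deletion disconnects `G`. -/
def IsEdgeCut {V : Type*} (G : SimpleGraph V) (X : Finset (Sym2 V)) : Prop :=
  G.Connected ∧ ↑X ⊆ G.edgeSet ∧ ¬(G.deleteEdges ↑X).Connected

/-- The edge-connectivity `λ(G)`: the minimum cardinality of an edge-cut. -/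
noncomputable def edgeConn {V : Type*} (G : SimpleGraph V) : ℕ :=
  sInf {n | ∃ X : Finset (Sym2 V), X.card = n ∧ IsEdgeCut G X}

/-- A mincut is an edge-cut of minimum cardinality. -/
def IsMincut {V : Type*} (G : SimpleGraph V) (X : Finset (Sym2 V)) : Prop :=
  IsEdgeCut G X ∧ X.card = edgeConn G

/-- The mincut graph `X(G)`: the intersection graph of the mincuts of `G`. -/
def mincutGraph {V : Type*} [DecidableEq V] (G : SimpleGraph V) :
    SimpleGraph {X : Finset (Sym2 V) // IsMincut G X} :=
  SimpleGraph.fromRel (fun X Y => (X.1 ∩ Y.1).Nonempty)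

/-- A mincut is trivial if it is the set of edges incident on a single vertex. -/
def IsTrivialMincut {V : Type*} (G : SimpleGraph V) (X : Finset (Sym2 V)) : Prop :=
  IsMincut G X ∧ ∃ v : V, ↑X = G.incidenceSet v

/-- `MincutSides G X A` says `X` is a mincut of `G` whose two sides are `A` and `Aᶜ`,
i.e. `X = ⟨A, Ā⟩`. -/
def MincutSides {V : Type*} (G : SimpleGraph V) (X : Finset (Sym2 V)) (A : Set V) : Prop :=
  IsMincut G X ∧ A.Nonempty ∧ Aᶜ.Nonempty ∧
  (↑X = {e | e ∈ G.edgeSet ∧ ∃ a ∈ A, ∃ b ∈ Aᶜ, e = s(a, b)}) ∧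
  (G.induce A).Connected ∧ (G.induce Aᶜ).Connected

/-- Two mincuts with sides `A` and `B` cross (overlap). -/
def Crossing {V : Type*} (A B : Set V) : Prop :=
  (A ∩ B).Nonempty ∧ (Aᶜ ∩ B).Nonempty ∧ (A ∩ Bᶜ).Nonempty ∧ (Aᶜ ∩ Bᶜ).Nonempty

/-- The number of edges of `G` with one endpoint in `S` and the other in `T`. -/
noncomputable def betweenEdges {V : Type*} (G : SimpleGraph V) (S T : Set V) : ℕ :=
  {e | e ∈ G.edgeSet ∧ ∃ a ∈ S, ∃ b ∈ T, e = s(a, b)}.ncard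

/-!
Write `P, Q, R, S` for the quadrants `A ∩ B, A ∩ Bᶜ, Aᶜ ∩ B, Aᶜ ∩ Bᶜ` and `e(·,·)` for the number
of edges between two of them. Both mincuts have size `λ`:
`λ = e(P,R) + e(P,S) + e(Q,R) + e(Q,S) = e(P,Q) + e(P,S) + e(Q,R) + e(R,S)`,
while the boundary of every quadrant, being an edge-cut, has size at least `λ`. Adding the bounds
for `P` and `S` and comparing with the two equations forces `e(P,S) = e(Q,R) = 0`; then all four
bounds are equalities, whence `e(P,R) = e(Q,S)` and `λ = 2 e(P,R)`.
-/

section BetweenEdges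

variable {V : Type*} (G : SimpleGraph V)

def betweenEdgeSet (S T : Set V) : Set (Sym2 V) :=
  {e | e ∈ G.edgeSet ∧ ∃ a ∈ S, ∃ b ∈ T, e = s(a, b)}

theorem betweenEdgeSet_comm (S T : Set V) : betweenEdgeSet G S T = betweenEdgeSet G T S := by
  ext e
  constructor <;> rintro ⟨he, a, ha, b, hb, rfl⟩ <;> exact ⟨he, b, hb, a, ha, Sym2.eq_swap⟩

theorem betweenEdgeSet_union_left (S₁ S₂ T : Set V) :
    betweenEdgeSet G (S₁ ∪ S₂) T = betweenEdgeSet G S₁ T ∪ betweenEdgeSet G S₂ T := by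
  ext e
  constructor
  · rintro ⟨he, a, ha | ha, b, hb, rfl⟩
    exacts [Or.inl ⟨he, a, ha, b, hb, rfl⟩, Or.inr ⟨he, a, ha, b, hb, rfl⟩]
  · rintro (⟨he, a, ha, b, hb, rfl⟩ | ⟨he, a, ha, b, hb, rfl⟩)
    exacts [⟨he, a, Or.inl ha, b, hb, rfl⟩, ⟨he, a, Or.inr ha, b, hb, rfl⟩]

theorem disjoint_betweenEdgeSet_left {S₁ S₂ T : Set V} (hS : Disjoint S₁ S₂)
    (hT : Disjoint S₁ T) : Disjoint (betweenEdgeSet G S₁ T) (betweenEdgeSet G S₂ T) := by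
  rw [Set.disjoint_left]
  rintro e ⟨-, a, ha, b, hb, rfl⟩ ⟨-, a', ha', b', hb', h⟩
  rcases Sym2.eq_iff.mp h with ⟨rfl, rfl⟩ | ⟨rfl, rfl⟩
  · exact hS.notMem_of_mem_left ha ha'
  · exact hT.notMem_of_mem_left ha hb'

theorem betweenEdges_comm (S T : Set V) : betweenEdges G S T = betweenEdges G T S :=
  congrArg Set.ncard (betweenEdgeSet_comm G S T)

theorem MincutSides.betweenEdges_eq {G : SimpleGraph V} {X : Finset (Sym2 V)} {A : Set V}
    (h : MincutSides G X A) : betweenEdges G A Aᶜ = edgeConn G := by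
  rw [betweenEdges, ← h.2.2.2.1, Set.ncard_coe_finset, h.1.2]

variable [Finite V]

theorem betweenEdges_union_left {S₁ S₂ T : Set V} (hS : Disjoint S₁ S₂) (hT : Disjoint S₁ T) :
    betweenEdges G (S₁ ∪ S₂) T = betweenEdges G S₁ T + betweenEdges G S₂ T :=
  (congrArg Set.ncard (betweenEdgeSet_union_left G S₁ S₂ T)).trans
    (Set.ncard_union_eq (disjoint_betweenEdgeSet_left G hS hT))

theorem betweenEdges_union_right {S T₁ T₂ : Set V} (hT : Disjoint T₁ T₂) (hS : Disjoint T₁ S) :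
    betweenEdges G S (T₁ ∪ T₂) = betweenEdges G S T₁ + betweenEdges G S T₂ := by
  rw [betweenEdges_comm, betweenEdges_union_left G hT hS, betweenEdges_comm G T₁,
    betweenEdges_comm G T₂]

theorem betweenEdges_compl_eq_quadrants (A B : Set V) :
    betweenEdges G A Aᶜ =
      betweenEdges G (A ∩ B) (Aᶜ ∩ B) + betweenEdges G (A ∩ B) (Aᶜ ∩ Bᶜ) +
        (betweenEdges G (A ∩ Bᶜ) (Aᶜ ∩ B) + betweenEdges G (A ∩ Bᶜ) (Aᶜ ∩ Bᶜ)) := by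
  have hsplit : betweenEdges G A Aᶜ =
      betweenEdges G (A ∩ B ∪ A ∩ Bᶜ) (Aᶜ ∩ B ∪ Aᶜ ∩ Bᶜ) := by
    rw [Set.inter_union_compl, Set.inter_union_compl]
  rw [hsplit, betweenEdges_union_left, betweenEdges_union_right, betweenEdges_union_right]
  all_goals
    rw [Set.disjoint_left]
    intro x
    simp only [Set.mem_inter_iff, Set.mem_compl_iff, Set.mem_union]
    tauto

theorem betweenEdges_inter_compl (A B : Set V) :
    betweenEdges G (A ∩ B) (A ∩ B)ᶜ =
      betweenEdges G (A ∩ B) (A ∩ Bᶜ) +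
        (betweenEdges G (A ∩ B) (Aᶜ ∩ B) + betweenEdges G (A ∩ B) (Aᶜ ∩ Bᶜ)) := by
  have hcompl : (A ∩ B)ᶜ = A ∩ Bᶜ ∪ (Aᶜ ∩ B ∪ Aᶜ ∩ Bᶜ) := by
    ext x
    simp only [Set.mem_inter_iff, Set.mem_compl_iff, Set.mem_union]
    tauto
  rw [hcompl, betweenEdges_union_right, betweenEdges_union_right]
  all_goals
    rw [Set.disjoint_left]
    intro x
    simp only [Set.mem_inter_iff, Set.mem_compl_iff, Set.mem_union]
    tauto

theorem edgeConn_le_betweenEdges (hG : G.Connected) {S : Set V} (hS : S.Nonempty)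
    (hSc : Sᶜ.Nonempty) : edgeConn G ≤ betweenEdges G S Sᶜ := by
  obtain ⟨a, ha⟩ := hS
  obtain ⟨b, hb⟩ := hSc
  have hfin : (betweenEdgeSet G S Sᶜ).Finite := Set.toFinite _
  refine Nat.sInf_le ⟨hfin.toFinset, Set.ncard_eq_toFinset_card _ hfin |>.symm, hG, ?_, ?_⟩
  · rw [hfin.coe_toFinset]
    exact fun e he => he.1
  · intro hcon
    obtain ⟨d, -, hdS, hdSc⟩ := (hcon.preconnected a b).some.exists_boundary_dart S ha hb
    have hadj := d.adj
    rw [deleteEdges_adj] at hadj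
    simp only [hfin.coe_toFinset] at hadj
    exact hadj.2 ⟨G.mem_edgeSet.mpr hadj.1, d.fst, hdS, d.snd, hdSc, rfl⟩

end BetweenEdges

theorem stmt_7_general {V : Type*} [Fintype V] (G : SimpleGraph V)
    (X Y : Finset (Sym2 V)) (A B : Set V)
    (hX : MincutSides G X A) (hY : MincutSides G Y B) (hcross : Crossing A B) :
    Even (edgeConn G) := by
  obtain ⟨⟨p, hp⟩, ⟨r, hr⟩, ⟨q, hq⟩, ⟨s, hs⟩⟩ := hcross
  have hG : G.Connected := hX.1.1.1
  have hP := edgeConn_le_betweenEdges G hG (S := A ∩ B) ⟨p, hp⟩ ⟨s, fun h => hs.1 h.1⟩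
  have hQ := edgeConn_le_betweenEdges G hG (S := A ∩ Bᶜ) ⟨q, hq⟩ ⟨p, fun h => h.2 hp.2⟩
  have hR := edgeConn_le_betweenEdges G hG (S := Aᶜ ∩ B) ⟨r, hr⟩ ⟨p, fun h => h.1 hp.1⟩
  have hS := edgeConn_le_betweenEdges G hG (S := Aᶜ ∩ Bᶜ) ⟨s, hs⟩ ⟨p, fun h => h.1 hp.1⟩
  rw [betweenEdges_inter_compl] at hP hQ hR hS
  have hA := hX.betweenEdges_eq
  have hB := hY.betweenEdges_eq
  rw [betweenEdges_compl_eq_quadrants G A B] at hA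
  rw [betweenEdges_compl_eq_quadrants G B A] at hB
  simp only [compl_compl, Set.inter_comm B, Set.inter_comm Bᶜ,
    betweenEdges_comm G (A ∩ Bᶜ) (A ∩ B), betweenEdges_comm G (Aᶜ ∩ B) (A ∩ B),
    betweenEdges_comm G (Aᶜ ∩ B) (A ∩ Bᶜ), betweenEdges_comm G (Aᶜ ∩ Bᶜ) (A ∩ B),
    betweenEdges_comm G (Aᶜ ∩ Bᶜ) (A ∩ Bᶜ), betweenEdges_comm G (Aᶜ ∩ Bᶜ) (Aᶜ ∩ B)]
    at hQ hR hS hB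
  exact ⟨betweenEdges G (A ∩ B) (Aᶜ ∩ B), by omega⟩

/-- If two mincuts of `G` cross, then `λ(G)` is even. -/
theorem stmt_7 {V : Type*} [Fintype V] [DecidableEq V] (G : SimpleGraph V)
    (X Y : Finset (Sym2 V)) (A B : Set V)
    (hX : MincutSides G X A) (hY : MincutSides G Y B) (hcross : Crossing A B) :
    Even (edgeConn G) :=
  stmt_7_general G X Y A B hX hY hcross
end

section
/- Let G be a simple connected graph with a non-trivial mincut X_k = ⟨A,Ā⟩, and let v ∈ A be a vertex that is not a vertex of attachment of A. If v is trivial (deg(v) = λ(G)), then its trivial mincut X_v satisfies X_v ∩ X_k = ∅; consequently, if every mincut of G other than X_k is trivial and no trivial vertex lies in the attachment sets of X_k, then X(G) is disconnected. -/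
open SimpleGraph

/- A trivial vertex `v` strictly inside `A` has its whole star `X_v` inside `A`, so `X_v` misses
`X_k`. Under the extra hypotheses every mincut other than `X_k` is the star of a trivial vertex,
and no such star meets `X_k`; thus `X_k` is an isolated vertex of `X(G)`, distinct from `X_v`. -/

namespace SimpleGraph

variable {V : Type*} (G : SimpleGraph V)

lemma isIsolated_deleteEdges_incidenceSet (v : V) :
    (G.deleteEdges (G.incidenceSet v)).IsIsolated v := fun w h =>
  ((deleteEdges_adj ..).mp h).2 ⟨h.1, Sym2.mem_mk_left v w⟩

lemma isEdgeCut_incidenceFinset [Nontrivial V] [DecidableEq V] (hG : G.Connected) (v : V)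
    [Fintype (G.neighborSet v)] : IsEdgeCut G (G.incidenceFinset v) := by
  refine ⟨hG, by simpa using G.incidenceSet_subset v, fun hconn => ?_⟩
  rw [coe_incidenceFinset] at hconn
  exact hconn.preconnected.not_isIsolated v (G.isIsolated_deleteEdges_incidenceSet v)

lemma isMincut_incidenceFinset [Nontrivial V] [DecidableEq V] (hG : G.Connected) {v : V}
    [Fintype (G.neighborSet v)] (hv : G.degree v = edgeConn G) :
    IsMincut G (G.incidenceFinset v) :=
  ⟨G.isEdgeCut_incidenceFinset hG v, by rw [card_incidenceFinset_eq_degree, hv]⟩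

lemma degree_eq_edgeConn_of_coe_eq_incidenceSet [DecidableEq V] {Y : Finset (Sym2 V)}
    (hY : IsMincut G Y) {w : V} [Fintype (G.neighborSet w)]
    (hYw : (↑Y : Set (Sym2 V)) = G.incidenceSet w) : G.degree w = edgeConn G := by
  rw [← card_incidenceFinset_eq_degree, ← hY.2]
  congr 1
  exact Finset.coe_injective (by rw [coe_incidenceFinset, hYw])

lemma disjoint_of_coe_eq_incidenceSet {X Y : Finset (Sym2 V)} {w : V}
    (hYw : (↑Y : Set (Sym2 V)) = G.incidenceSet w) (hw : ¬∃ e ∈ X, w ∈ e) : Disjoint X Y :=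
  Finset.disjoint_left.mpr fun e heX heY => hw ⟨e, heX, (hYw ▸ Finset.mem_coe.mpr heY).2⟩

lemma mincutGraph_adj [DecidableEq V] {X Y : {X : Finset (Sym2 V) // IsMincut G X}} :
    (mincutGraph G).Adj X Y ↔ X ≠ Y ∧ ¬Disjoint X.1 Y.1 := by
  rw [mincutGraph, fromRel_adj, Finset.inter_comm Y.1, or_self,
    Finset.not_disjoint_iff_nonempty_inter]

lemma not_connected_mincutGraph_of_forall_disjoint [DecidableEq V] {X Y : Finset (Sym2 V)}
    (hX : IsMincut G X) (hY : IsMincut G Y) (hXY : X ≠ Y)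
    (hdisj : ∀ Z, IsMincut G Z → Z ≠ X → Disjoint X Z) : ¬(mincutGraph G).Connected := by
  have : Nontrivial {X : Finset (Sym2 V) // IsMincut G X} :=
    nontrivial_of_ne ⟨X, hX⟩ ⟨Y, hY⟩ (Subtype.coe_ne_coe.mp hXY)
  refine fun hconn => hconn.preconnected.not_isIsolated ⟨X, hX⟩ fun ⟨Z, hZ⟩ hadj => ?_
  obtain ⟨hne, hmeet⟩ := (G.mincutGraph_adj).mp hadj
  exact hmeet (hdisj Z hZ fun h => hne (Subtype.ext h.symm))

end SimpleGraph

/-- If `v ∈ A` is a trivial vertex that is not a vertex of attachment of the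
non-trivial mincut `X_k = ⟨A,Ā⟩`, then its trivial mincut is disjoint from `X_k`;
consequently, if every other mincut is trivial and no trivial vertex is a vertex of
attachment of `X_k`, then `X(G)` is disconnected. -/
theorem stmt_19 {V : Type*} [Fintype V] [DecidableEq V] (G : SimpleGraph V) [DecidableRel G.Adj]
    (Xk : Finset (Sym2 V)) (A : Set V) (hk : MincutSides G Xk A)
    (hnt : ¬∃ w : V, (↑Xk : Set (Sym2 V)) = G.incidenceSet w)
    (v : V) (hvA : v ∈ A) (hvatt : ¬∃ e ∈ Xk, v ∈ e)
    (hvtriv : G.degree v = edgeConn G) :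
    G.incidenceFinset v ∩ Xk = ∅ ∧
    ((∀ Y : Finset (Sym2 V), IsMincut G Y → Y ≠ Xk →
        ∃ w : V, (↑Y : Set (Sym2 V)) = G.incidenceSet w) →
      (∀ w : V, G.degree w = edgeConn G → ¬∃ e ∈ Xk, w ∈ e) →
      ¬(mincutGraph G).Connected) := by
  obtain ⟨hXk, -, ⟨w, hw⟩, -⟩ := hk
  have : Nontrivial V := ⟨⟨v, w, fun h => hw (h ▸ hvA)⟩⟩
  have hXv := G.isMincut_incidenceFinset hXk.1.1 hvtriv
  refine ⟨Finset.disjoint_iff_inter_eq_empty.mp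
    (G.disjoint_of_coe_eq_incidenceSet (coe_incidenceFinset G v) hvatt).symm, ?_⟩
  intro hother hatt
  refine G.not_connected_mincutGraph_of_forall_disjoint hXk hXv
    (fun h => hnt ⟨v, by rw [h, coe_incidenceFinset]⟩) fun Y hY hYne => ?_
  obtain ⟨u, hu⟩ := hother Y hY hYne
  exact G.disjoint_of_coe_eq_incidenceSet hu
    (hatt u (G.degree_eq_edgeConn_of_coe_eq_incidenceSet hY hu))
end
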